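/- arXiv:2112.13763 — 2 statements merged into one kernel-verified Lean document; each statement's English description precedes it below -/
import Mathlib

section
/- The function f(x) = −log x is operator convex on (0,∞): for every size n, all positive definite n×n complex matrices A, B, and all t ∈ [0,1], t log A + (1−t) log B ≤ log(tA + (1−t)B) in the Loewner order. -/
open Matrix
open scoped ComplexOrder

/-- `matFun f A` is `f(A)` for a Hermitian matrix `A`, defined via the spectral
decomposition `A = U diag(λ) U*` as `U diag(f(λ)) U*` (and junk value `0` otherwise). -/
noncomputable def matFun {n : Type*} [Fintype n] [DecidableEq n]
    (f : ℝ → ℝ) (A : Matrix n n ℂ) : Matrix n n ℂ :=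
  if hA : A.IsHermitian then
    (hA.eigenvectorUnitary : Matrix n n ℂ) *
      Matrix.diagonal (fun i => (f (hA.eigenvalues i) : ℂ)) *
      star (hA.eigenvectorUnitary : Matrix n n ℂ)
  else 0

/-!
With the operator norm, complex matrices form a unital C⋆-algebra whose C⋆-order is the Loewner
order, and on Hermitian matrices `matFun f` is the continuous functional calculus `cfc f`. So the
claim is the operator concavity of `CFC.log`, which holds in every unital C⋆-algebra because
`log x` is the limit as `p ↓ 0` of the operator concave functions `(x ^ p - 1) / p`.
-/

open scoped MatrixOrder Matrix.Norms.L2Operator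

lemma Matrix.IsHermitian.matFun_eq_cfc {n : Type*} [Fintype n] [DecidableEq n]
    {A : Matrix n n ℂ} (hA : A.IsHermitian) (f : ℝ → ℝ) : matFun f A = cfc f A := by
  rw [hA.cfc_eq, IsHermitian.cfc, Unitary.conjStarAlgAut_apply, matFun, dif_pos hA]
  rfl

/-- The function `x ↦ −log x` is operator convex on `(0, ∞)`; equivalently
`t log A + (1 − t) log B ≤ log (t A + (1 − t) B)` in the Loewner order. -/
theorem operatorConvex_neg_log
    {n : ℕ} (A B : Matrix (Fin n) (Fin n) ℂ) (hA : A.PosDef) (hB : B.PosDef)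
    (t : ℝ) (ht0 : 0 ≤ t) (ht1 : t ≤ 1) :
    (matFun Real.log (t • A + (1 - t) • B)
      - (t • matFun Real.log A + (1 - t) • matFun Real.log B)).PosSemidef := by
  have hlog := CFC.concaveOn_log (A := Matrix (Fin n) (Fin n) ℂ)
  have hC : (t • A + (1 - t) • B).PosDef :=
    (hlog.1 hA.isStrictlyPositive hB.isStrictlyPositive ht0 (sub_nonneg.2 ht1)
      (add_sub_cancel t 1)).posDef
  rw [hA.1.matFun_eq_cfc, hB.1.matFun_eq_cfc, hC.1.matFun_eq_cfc, ← Matrix.le_iff]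
  exact hlog.2 hA.isStrictlyPositive hB.isStrictlyPositive ht0 (sub_nonneg.2 ht1)
    (add_sub_cancel t 1)
end

section
/- Let g : (0,∞) → ℝ be operator convex with g(1) = 0. Then the function h(x) = x · g(x⁻¹) is also operator convex on (0,∞). -/
open Matrix
open scoped ComplexOrder

/-- A function `g : (0, ∞) → ℝ` (modelled as `g : ℝ → ℝ`, only its values on `(0, ∞)`
matter) is operator convex if for every size `n`, all positive definite `n × n` complex
matrices `A, B` and all `t ∈ [0, 1]`,
`g(t A + (1 − t) B) ≤ t g(A) + (1 − t) g(B)` in the Loewner order. -/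
def OperatorConvex (g : ℝ → ℝ) : Prop :=
  ∀ (n : ℕ) (A B : Matrix (Fin n) (Fin n) ℂ), A.PosDef → B.PosDef →
    ∀ t : ℝ, 0 ≤ t → t ≤ 1 →
      (t • matFun g A + (1 - t) • matFun g B - matFun g (t • A + (1 - t) • B)).PosSemidef

/-! For `C = tA + (1-t)B` the matrices `V = √t A^{1/2} C^{-1/2}` and `W = √(1-t) B^{1/2} C^{-1/2}`
satisfy `V*V + W*W = 1` and `V*A⁻¹V + W*B⁻¹W = C⁻¹`, and `(V, W)` extends to a unitary.
Operator convexity of `g` gives, by pinching with the reflection `1 ⊕ (-1)`, Jensen's operator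
inequality `g(V*PV + W*QW) ≤ V*g(P)V + W*g(Q)W`; at `P = A⁻¹, Q = B⁻¹` it reads
`g(C⁻¹) ≤ V*g(A⁻¹)V + W*g(B⁻¹)W`. Conjugating by `C^{1/2}` and using
`P^{1/2} g(P⁻¹) P^{1/2} = h(P)` turns this into `h(C) ≤ t h(A) + (1-t) h(B)`. -/

open Polynomial

theorem Set.Finite.exists_polynomial_eqOn {s : Set ℝ} (hs : s.Finite) (f : ℝ → ℝ) :
    ∃ q : ℝ[X], Set.EqOn f (fun x => q.eval x) s := by
  classical
  refine ⟨Lagrange.interpolate hs.toFinset id f, fun x hx => ?_⟩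
  exact (Lagrange.eval_interpolate_at_node f Function.injective_id.injOn
    (hs.mem_toFinset.mpr hx)).symm

namespace Matrix

lemma PosDef.smul_add_one_sub_smul {n : Type*} {A B : Matrix n n ℂ} (hA : A.PosDef)
    (hB : B.PosDef) {t : ℝ} (ht0 : 0 ≤ t) (ht1 : t ≤ 1) : (t • A + (1 - t) • B).PosDef := by
  rcases ht0.eq_or_lt with rfl | ht
  · simpa using hB
  · exact (hA.smul ht).add_posSemidef (hB.posSemidef.smul (sub_nonneg.2 ht1))

section

variable {n m : Type*} [Fintype n] [Fintype m]

lemma conjTranspose_smul_mul_mul_smul (a b : ℝ) (S G T : Matrix n n ℂ) :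
    (a • S)ᴴ * G * (b • T) = (a * b) • (Sᴴ * G * T) := by
  simp only [conjTranspose_smul, star_trivial, Matrix.smul_mul, Matrix.mul_smul, smul_smul,
    mul_comm b a]

lemma toBlocks₁₁_conjTranspose_mul_fromBlocks_zero_mul (V : Matrix n n ℂ) (X : Matrix n m ℂ)
    (W : Matrix m n ℂ) (Y : Matrix m m ℂ) (P : Matrix n n ℂ) (Q : Matrix m m ℂ) :
    ((fromBlocks V X W Y)ᴴ * fromBlocks P 0 0 Q * fromBlocks V X W Y).toBlocks₁₁ =
      Vᴴ * P * V + Wᴴ * Q * W := by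
  simp [fromBlocks_conjTranspose, fromBlocks_multiply, Matrix.mul_assoc]

end

variable {n m : Type*} [Fintype n] [DecidableEq n] [Fintype m] [DecidableEq m]

lemma matFun_eq_cfc (f : ℝ → ℝ) (A : Matrix n n ℂ) : matFun f A = cfc f A := by
  by_cases hA : A.IsHermitian
  · rw [matFun, dif_pos hA, hA.cfc_eq, IsHermitian.cfc, Unitary.conjStarAlgAut_apply]
    rfl
  · rw [matFun, dif_neg hA, cfc_apply_of_not_predicate (p := IsSelfAdjoint) A hA]

@[fun_prop]
lemma continuousOn_spectrum (f : ℝ → ℝ) (A : Matrix n n ℂ) : ContinuousOn f (spectrum ℝ A) :=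
  finite_real_spectrum.continuousOn f

lemma PosDef.pos_of_mem_spectrum {A : Matrix n n ℂ} (hA : A.PosDef) {x : ℝ}
    (hx : x ∈ spectrum ℝ A) : 0 < x := by
  obtain ⟨i, rfl⟩ := hA.isHermitian.spectrum_real_eq_range_eigenvalues ▸ hx
  exact hA.eigenvalues_pos i

lemma conjTranspose_cfc (f : ℝ → ℝ) (A : Matrix n n ℂ) : (cfc f A)ᴴ = cfc f A :=
  (cfc_predicate (p := IsSelfAdjoint) f A).star_eq

/-- Every function agrees with a polynomial on the finite spectrum of a matrix, so unlike the
general `StarAlgHom.map_cfc` no star or continuity assumption on `φ` is needed. -/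
lemma map_cfc_of_algHom {F : Type*} [FunLike F (Matrix n n ℂ) (Matrix m m ℂ)]
    [AlgHomClass F ℝ (Matrix n n ℂ) (Matrix m m ℂ)] (φ : F) (f : ℝ → ℝ)
    {A : Matrix n n ℂ} (hA : A.IsHermitian) (hφA : (φ A).IsHermitian) :
    φ (cfc f A) = cfc f (φ A) := by
  obtain ⟨q, hq⟩ := (finite_real_spectrum (A := A)).union (finite_real_spectrum (A := φ A))
    |>.exists_polynomial_eqOn f
  rw [cfc_congr (hq.mono Set.subset_union_left), cfc_congr (hq.mono Set.subset_union_right),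
    cfc_polynomial q A hA.isSelfAdjoint, cfc_polynomial q (φ A) hφA.isSelfAdjoint,
    aeval_algHom_apply]

lemma cfc_unitary_conj (f : ℝ → ℝ) {U A : Matrix n n ℂ} (hU : U ∈ unitary (Matrix n n ℂ))
    (hA : A.IsHermitian) : cfc f (U * A * Uᴴ) = U * cfc f A * Uᴴ :=
  (map_cfc_of_algHom (Unitary.conjStarAlgAut ℝ _ ⟨U, hU⟩) f hA
    (isHermitian_mul_mul_conjTranspose U hA)).symm

lemma aeval_fromBlocks_zero {R : Type*} [CommSemiring R] {α : Type*} [Semiring α] [Algebra R α]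
    (A : Matrix n n α) (B : Matrix m m α) (q : R[X]) :
    aeval (fromBlocks A 0 0 B) q = fromBlocks (aeval A q) 0 0 (aeval B q) := by
  induction q using Polynomial.induction_on' with
  | add p q hp hq => simp only [map_add, hp, hq, fromBlocks_add, add_zero]
  | monomial k r =>
    simp only [aeval_monomial, fromBlocks_diagonal_pow, Algebra.algebraMap_eq_smul_one,
      smul_mul_assoc, one_mul, fromBlocks_smul, smul_zero]

lemma cfc_fromBlocks_zero (f : ℝ → ℝ) {A : Matrix n n ℂ} {B : Matrix m m ℂ}
    (hA : A.IsHermitian) (hB : B.IsHermitian) :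
    cfc f (fromBlocks A 0 0 B) = fromBlocks (cfc f A) 0 0 (cfc f B) := by
  have hAB : (fromBlocks A 0 0 B).IsHermitian := hA.fromBlocks (by simp) hB
  obtain ⟨q, hq⟩ := ((finite_real_spectrum (A := fromBlocks A 0 0 B)).union
    ((finite_real_spectrum (A := A)).union (finite_real_spectrum (A := B))))
    |>.exists_polynomial_eqOn f
  rw [cfc_congr (hq.mono Set.subset_union_left),
    cfc_congr (hq.mono (Set.subset_union_left.trans Set.subset_union_right)),
    cfc_congr (hq.mono (Set.subset_union_right.trans Set.subset_union_right)),
    cfc_polynomial q _ hAB.isSelfAdjoint, cfc_polynomial q A hA.isSelfAdjoint,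
    cfc_polynomial q B hB.isSelfAdjoint, aeval_fromBlocks_zero]

lemma PosDef.fromBlocks_zero {A : Matrix n n ℂ} {B : Matrix m m ℂ} (hA : A.PosDef)
    (hB : B.PosDef) : (fromBlocks A 0 0 B).PosDef := by
  let := hA.isUnit.invertible
  have h : (fromBlocks A 0 0ᴴ B).PosSemidef :=
    (hA.fromBlocks₁₁ 0 B).2 (by simpa using hB.posSemidef)
  rw [conjTranspose_zero] at h
  exact h.posDef_iff_isUnit.2 (isUnit_fromBlocks_zero₂₁.2 ⟨hA.isUnit, hB.isUnit⟩)

lemma PosDef.mul_mul_conjTranspose_of_mem_unitary {A U : Matrix n n ℂ} (hA : A.PosDef)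
    (hU : U ∈ unitary (Matrix n n ℂ)) : (U * A * Uᴴ).PosDef := by
  simpa using hA.conjTranspose_mul_mul_same (B := Uᴴ)
    (Function.LeftInverse.injective (g := U.mulVec) fun x => by
      rw [mulVec_mulVec, ← star_eq_conjTranspose, Unitary.mul_star_self_of_mem hU, one_mulVec])

def blockReflection : Matrix (n ⊕ m) (n ⊕ m) ℂ := fromBlocks 1 0 0 (-1)

lemma blockReflection_mem_unitary :
    (blockReflection : Matrix (n ⊕ m) (n ⊕ m) ℂ) ∈ unitary (Matrix (n ⊕ m) (n ⊕ m) ℂ) := by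
  rw [Unitary.mem_iff]
  constructor <;> simp [blockReflection, star_eq_conjTranspose, fromBlocks_conjTranspose,
    fromBlocks_multiply, fromBlocks_one]

lemma midpoint_blockReflection_conj (M : Matrix (n ⊕ m) (n ⊕ m) ℂ) :
    (1 / 2 : ℝ) • M + (1 / 2 : ℝ) • (blockReflection * M * blockReflectionᴴ) =
      fromBlocks M.toBlocks₁₁ 0 0 M.toBlocks₂₂ := by
  conv_lhs => rw [← fromBlocks_toBlocks M]
  simp only [blockReflection, fromBlocks_conjTranspose, fromBlocks_multiply, fromBlocks_smul,
    fromBlocks_add]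
  congr 1 <;> simp <;> module

namespace PosDef

variable {P : Matrix n n ℂ}

lemma cfc_mul_cfc (hP : P.PosDef) {f₁ f₂ h : ℝ → ℝ} (hf : ∀ x, 0 < x → f₁ x * f₂ x = h x) :
    cfc f₁ P * cfc f₂ P = cfc h P := by
  rw [← cfc_mul f₁ f₂ P]
  exact cfc_congr fun x hx => hf x (hP.pos_of_mem_spectrum hx)

lemma cfc_mul_cfc_mul_cfc (hP : P.PosDef) {f₁ f₂ f₃ h : ℝ → ℝ}
    (hf : ∀ x, 0 < x → f₁ x * f₂ x * f₃ x = h x) :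
    cfc f₁ P * cfc f₂ P * cfc f₃ P = cfc h P := by
  rw [hP.cfc_mul_cfc (h := fun x => f₁ x * f₂ x) fun _ _ => rfl]
  exact hP.cfc_mul_cfc hf

lemma inv_eq_cfc (hP : P.PosDef) : P⁻¹ = cfc (fun x : ℝ => x⁻¹) P := by
  refine inv_eq_left_inv ?_
  calc cfc (fun x : ℝ => x⁻¹) P * P = cfc (fun x : ℝ => x⁻¹) P * cfc (fun x => x) P := by
        rw [cfc_id' ℝ P hP.isHermitian.isSelfAdjoint]
    _ = 1 := by
      rw [hP.cfc_mul_cfc (h := 1) fun x hx => inv_mul_cancel₀ hx.ne']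
      exact cfc_const_one ℝ P hP.isHermitian.isSelfAdjoint

lemma cfc_inv (hP : P.PosDef) (f : ℝ → ℝ) : cfc f P⁻¹ = cfc (fun x => f x⁻¹) P := by
  rw [hP.inv_eq_cfc, ← cfc_comp' f (fun x : ℝ => x⁻¹) P
    ((finite_real_spectrum.image _).continuousOn f) (ha := hP.isHermitian.isSelfAdjoint)]

lemma cfc_sqrt_mul_self (hP : P.PosDef) : cfc Real.sqrt P * cfc Real.sqrt P = P :=
  (hP.cfc_mul_cfc (h := fun x => x) fun _ hx => Real.mul_self_sqrt hx.le).trans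
    (cfc_id' ℝ P hP.isHermitian.isSelfAdjoint)

lemma cfc_invSqrt_mul_self_mul_cfc_invSqrt (hP : P.PosDef) :
    cfc (fun x => (√x)⁻¹) P * P * cfc (fun x => (√x)⁻¹) P = 1 := by
  nth_rw 2 [← cfc_id' ℝ P hP.isHermitian.isSelfAdjoint]
  rw [hP.cfc_mul_cfc_mul_cfc (h := fun _ => 1) fun x hx => by
    rw [mul_right_comm, ← mul_inv, Real.mul_self_sqrt hx.le, inv_mul_cancel₀ hx.ne']]
  exact cfc_const_one ℝ P hP.isHermitian.isSelfAdjoint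

lemma cfc_sqrt_mul_cfc_inv_mul_cfc_sqrt (hP : P.PosDef) (g : ℝ → ℝ) :
    cfc Real.sqrt P * cfc g P⁻¹ * cfc Real.sqrt P = cfc (fun x => x * g x⁻¹) P := by
  rw [hP.cfc_inv g]
  exact hP.cfc_mul_cfc_mul_cfc fun x hx => by rw [mul_right_comm, Real.mul_self_sqrt hx.le]

end PosDef

noncomputable def sqrtDivSqrt (P C : Matrix n n ℂ) : Matrix n n ℂ :=
  cfc Real.sqrt P * cfc (fun x => (√x)⁻¹) C

variable {P C D : Matrix n n ℂ}

lemma sqrtDivSqrt_conjTranspose_mul_self (hP : P.PosDef) :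
    (sqrtDivSqrt P C)ᴴ * sqrtDivSqrt P C =
      cfc (fun x => (√x)⁻¹) C * P * cfc (fun x => (√x)⁻¹) C := by
  simp only [sqrtDivSqrt, conjTranspose_mul, conjTranspose_cfc, Matrix.mul_assoc]
  rw [← Matrix.mul_assoc (cfc Real.sqrt P), hP.cfc_sqrt_mul_self]

lemma sqrtDivSqrt_conjTranspose_mul_sqrtDivSqrt_inv (hP : P.PosDef) :
    (sqrtDivSqrt P C)ᴴ * sqrtDivSqrt P⁻¹ D =
      cfc (fun x => (√x)⁻¹) C * cfc (fun x => (√x)⁻¹) D := by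
  have h : cfc Real.sqrt P * cfc Real.sqrt P⁻¹ = 1 := by
    rw [hP.cfc_inv, hP.cfc_mul_cfc (h := fun _ => 1) fun x hx => by
      rw [Real.sqrt_inv, mul_inv_cancel₀ (Real.sqrt_pos.2 hx).ne']]
    exact cfc_const_one ℝ P hP.isHermitian.isSelfAdjoint
  simp only [sqrtDivSqrt, conjTranspose_mul, conjTranspose_cfc, Matrix.mul_assoc]
  rw [← Matrix.mul_assoc (cfc Real.sqrt P), h, Matrix.one_mul]

lemma sqrtDivSqrt_conjTranspose_mul_inv_mul (hP : P.PosDef) (hC : C.PosDef) :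
    (sqrtDivSqrt P C)ᴴ * P⁻¹ * sqrtDivSqrt P C = C⁻¹ := by
  have h : cfc Real.sqrt P * P⁻¹ * cfc Real.sqrt P = 1 := by
    rw [hP.inv_eq_cfc, hP.cfc_mul_cfc_mul_cfc (h := fun _ => 1) fun x hx => by
      rw [mul_right_comm, Real.mul_self_sqrt hx.le, mul_inv_cancel₀ hx.ne']]
    exact cfc_const_one ℝ P hP.isHermitian.isSelfAdjoint
  simp only [sqrtDivSqrt, conjTranspose_mul, conjTranspose_cfc, Matrix.mul_assoc]
  rw [← Matrix.mul_assoc (cfc Real.sqrt P) P⁻¹, ← Matrix.mul_assoc (cfc Real.sqrt P * P⁻¹), h,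
    Matrix.one_mul, hC.inv_eq_cfc]
  exact hC.cfc_mul_cfc fun x hx => by rw [← mul_inv, Real.mul_self_sqrt hx.le]

lemma sqrtDivSqrt_mul_cfc_sqrt (hC : C.PosDef) :
    sqrtDivSqrt P C * cfc Real.sqrt C = cfc Real.sqrt P := by
  rw [sqrtDivSqrt, Matrix.mul_assoc, hC.cfc_mul_cfc (h := fun _ => 1) fun x hx =>
    inv_mul_cancel₀ (Real.sqrt_pos.2 hx).ne', cfc_const_one ℝ C hC.isHermitian.isSelfAdjoint,
    Matrix.mul_one]

/-- The first block column `(√t A^{1/2} C^{-1/2}, √(1-t) B^{1/2} C^{-1/2})`, `C = tA + (1-t)B`,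
is the `(V, W)` of the transpose argument; the second column is built the same way from `A⁻¹`,
`B⁻¹` and `R = (1-t)A⁻¹ + tB⁻¹`. -/
noncomputable def transposeDilation (A B : Matrix n n ℂ) (t : ℝ) : Matrix (n ⊕ n) (n ⊕ n) ℂ :=
  fromBlocks (√t • sqrtDivSqrt A (t • A + (1 - t) • B))
    (-(√(1 - t) • sqrtDivSqrt A⁻¹ ((1 - t) • A⁻¹ + t • B⁻¹)))
    (√(1 - t) • sqrtDivSqrt B (t • A + (1 - t) • B))
    (√t • sqrtDivSqrt B⁻¹ ((1 - t) • A⁻¹ + t • B⁻¹))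

lemma transposeDilation_conjTranspose_mul_self {A B : Matrix n n ℂ} (hA : A.PosDef)
    (hB : B.PosDef) {t : ℝ} (ht0 : 0 ≤ t) (ht1 : t ≤ 1) :
    (transposeDilation A B t)ᴴ * transposeDilation A B t = 1 := by
  have hs0 : 0 ≤ 1 - t := sub_nonneg.2 ht1
  have hC := hA.smul_add_one_sub_smul hB ht0 ht1
  have hR := hA.inv.smul_add_one_sub_smul hB.inv hs0 (by linarith)
  rw [sub_sub_cancel] at hR
  set C := t • A + (1 - t) • B
  set R := (1 - t) • A⁻¹ + t • B⁻¹
  have h₁₂ : (√t • sqrtDivSqrt A C)ᴴ * -(√(1 - t) • sqrtDivSqrt A⁻¹ R) +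
      (√(1 - t) • sqrtDivSqrt B C)ᴴ * (√t • sqrtDivSqrt B⁻¹ R) = 0 := by
    simp only [conjTranspose_smul, star_trivial, Matrix.mul_neg, Matrix.smul_mul, Matrix.mul_smul,
      smul_smul, sqrtDivSqrt_conjTranspose_mul_sqrtDivSqrt_inv hA,
      sqrtDivSqrt_conjTranspose_mul_sqrtDivSqrt_inv hB, mul_comm √t]
    exact neg_add_cancel _
  rw [transposeDilation, fromBlocks_conjTranspose, fromBlocks_multiply, ← fromBlocks_one]
  congr 1
  · simp only [conjTranspose_smul, star_trivial, Matrix.smul_mul, Matrix.mul_smul, smul_smul,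
      Real.mul_self_sqrt ht0, Real.mul_self_sqrt hs0, sqrtDivSqrt_conjTranspose_mul_self hA,
      sqrtDivSqrt_conjTranspose_mul_self hB]
    rw [← hC.cfc_invSqrt_mul_self_mul_cfc_invSqrt]
    simp only [Matrix.mul_add, Matrix.add_mul, Matrix.mul_smul, Matrix.smul_mul, C]
  · simpa only [conjTranspose_add, conjTranspose_mul, conjTranspose_conjTranspose,
      conjTranspose_zero] using congrArg conjTranspose h₁₂
  · simp only [conjTranspose_smul, conjTranspose_neg, star_trivial, Matrix.neg_mul, Matrix.mul_neg,
      smul_neg, neg_neg, Matrix.smul_mul, Matrix.mul_smul, smul_smul, Real.mul_self_sqrt ht0,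
      Real.mul_self_sqrt hs0, sqrtDivSqrt_conjTranspose_mul_self hA.inv,
      sqrtDivSqrt_conjTranspose_mul_self hB.inv]
    rw [← hR.cfc_invSqrt_mul_self_mul_cfc_invSqrt]
    simp only [Matrix.mul_add, Matrix.add_mul, Matrix.mul_smul, Matrix.smul_mul, R]

lemma cfc_sqrt_conj_sqrtDivSqrt_conj (hC : C.PosDef) (G : Matrix n n ℂ) :
    cfc Real.sqrt C * ((sqrtDivSqrt P C)ᴴ * G * sqrtDivSqrt P C) * cfc Real.sqrt C =
      cfc Real.sqrt P * G * cfc Real.sqrt P := by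
  calc _ = (sqrtDivSqrt P C * cfc Real.sqrt C)ᴴ * G * (sqrtDivSqrt P C * cfc Real.sqrt C) := by
        simp only [conjTranspose_mul, conjTranspose_cfc, Matrix.mul_assoc]
    _ = _ := by rw [sqrtDivSqrt_mul_cfc_sqrt hC, conjTranspose_cfc]

end Matrix

namespace OperatorConvex

variable {g : ℝ → ℝ} {n m : Type*} [Fintype n] [DecidableEq n] [Fintype m] [DecidableEq m]

theorem posSemidef (hg : OperatorConvex g) {A B : Matrix n n ℂ} (hA : A.PosDef)
    (hB : B.PosDef) {t : ℝ} (ht0 : 0 ≤ t) (ht1 : t ≤ 1) :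
    (t • cfc g A + (1 - t) • cfc g B - cfc g (t • A + (1 - t) • B)).PosSemidef := by
  let e := Fintype.equivFin n
  let φ := reindexAlgEquiv ℝ ℂ e
  have hφ {X : Matrix n n ℂ} (hX : X.IsHermitian) : (φ X).IsHermitian := hX.submatrix e.symm
  have hC := (hA.smul_add_one_sub_smul hB ht0 ht1).isHermitian
  have h := hg _ (φ A) (φ B) (hA.submatrix e.symm.injective) (hB.submatrix e.symm.injective)
    t ht0 ht1
  simp only [matFun_eq_cfc] at h
  rw [← map_smul φ t A, ← map_smul φ (1 - t) B, ← map_add,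
    ← map_cfc_of_algHom φ g hA.isHermitian (hφ hA.isHermitian),
    ← map_cfc_of_algHom φ g hB.isHermitian (hφ hB.isHermitian),
    ← map_cfc_of_algHom φ g hC (hφ hC), ← map_smul, ← map_smul, ← map_add, ← map_sub] at h
  exact (posSemidef_submatrix_equiv e.symm).1 h

/-- Pinching: `M₁₁ ⊕ M₂₂` is the midpoint of `M` and its conjugate by `blockReflection`. -/
theorem posSemidef_toBlocks₁₁ (hg : OperatorConvex g) {M : Matrix (n ⊕ m) (n ⊕ m) ℂ}
    (hM : M.PosDef) : ((cfc g M).toBlocks₁₁ - cfc g M.toBlocks₁₁).PosSemidef := by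
  have hS := blockReflection_mem_unitary (n := n) (m := m)
  have h := hg.posSemidef hM (hM.mul_mul_conjTranspose_of_mem_unitary hS)
    (t := 1 / 2) (by norm_num) (by norm_num)
  have h₁₁ : M.toBlocks₁₁.IsHermitian := hM.isHermitian.submatrix Sum.inl
  have h₂₂ : M.toBlocks₂₂.IsHermitian := hM.isHermitian.submatrix Sum.inr
  rw [show (1 : ℝ) - 1 / 2 = 1 / 2 by norm_num, cfc_unitary_conj g hS hM.isHermitian,
    midpoint_blockReflection_conj, midpoint_blockReflection_conj,
    cfc_fromBlocks_zero g h₁₁ h₂₂] at h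
  convert h.submatrix (Sum.inl : n → n ⊕ m) using 1
  ext i j
  simp

theorem jensen (hg : OperatorConvex g) {P : Matrix n n ℂ} {Q : Matrix m m ℂ} (hP : P.PosDef)
    (hQ : Q.PosDef) {V : Matrix n n ℂ} {X : Matrix n m ℂ} {W : Matrix m n ℂ} {Y : Matrix m m ℂ}
    (hK : (fromBlocks V X W Y)ᴴ * fromBlocks V X W Y = 1) :
    (Vᴴ * cfc g P * V + Wᴴ * cfc g Q * W - cfc g (Vᴴ * P * V + Wᴴ * Q * W)).PosSemidef := by
  have hKu : (fromBlocks V X W Y)ᴴ ∈ unitary (Matrix (n ⊕ m) (n ⊕ m) ℂ) := by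
    rw [← star_eq_conjTranspose]
    exact Unitary.star_mem (mem_unitaryGroup_iff'.2 hK)
  have hD := hP.fromBlocks_zero hQ
  have h := hg.posSemidef_toBlocks₁₁ (hD.mul_mul_conjTranspose_of_mem_unitary hKu)
  rwa [cfc_unitary_conj g hKu hD.isHermitian,
    cfc_fromBlocks_zero g hP.isHermitian hQ.isHermitian, conjTranspose_conjTranspose,
    toBlocks₁₁_conjTranspose_mul_fromBlocks_zero_mul,
    toBlocks₁₁_conjTranspose_mul_fromBlocks_zero_mul] at h

end OperatorConvex

theorem operatorConvex_transpose_general (g : ℝ → ℝ) (hg : OperatorConvex g) :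
    OperatorConvex (fun x => x * g x⁻¹) := by
  intro n A B hA hB t ht0 ht1
  have hC := hA.smul_add_one_sub_smul hB ht0 ht1
  set C := t • A + (1 - t) • B
  have hJ : (t • ((sqrtDivSqrt A C)ᴴ * cfc g A⁻¹ * sqrtDivSqrt A C) +
      (1 - t) • ((sqrtDivSqrt B C)ᴴ * cfc g B⁻¹ * sqrtDivSqrt B C) - cfc g C⁻¹).PosSemidef := by
    have h := hg.jensen hA.inv hB.inv (transposeDilation_conjTranspose_mul_self hA hB ht0 ht1)
    rwa [conjTranspose_smul_mul_mul_smul, conjTranspose_smul_mul_mul_smul,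
      conjTranspose_smul_mul_mul_smul, conjTranspose_smul_mul_mul_smul, Real.mul_self_sqrt ht0,
      Real.mul_self_sqrt (sub_nonneg.2 ht1), sqrtDivSqrt_conjTranspose_mul_inv_mul hA hC,
      sqrtDivSqrt_conjTranspose_mul_inv_mul hB hC, ← add_smul, add_sub_cancel, one_smul] at h
  simp only [matFun_eq_cfc]
  convert hJ.conjTranspose_mul_mul_same (cfc Real.sqrt C) using 1
  rw [conjTranspose_cfc, Matrix.mul_sub, Matrix.sub_mul, Matrix.mul_add, Matrix.add_mul,
    Matrix.mul_smul, Matrix.smul_mul, Matrix.mul_smul, Matrix.smul_mul,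
    cfc_sqrt_conj_sqrtDivSqrt_conj hC, cfc_sqrt_conj_sqrtDivSqrt_conj hC,
    hA.cfc_sqrt_mul_cfc_inv_mul_cfc_sqrt, hB.cfc_sqrt_mul_cfc_inv_mul_cfc_sqrt,
    hC.cfc_sqrt_mul_cfc_inv_mul_cfc_sqrt]

/-- If `g` is operator convex on `(0, ∞)` with `g(1) = 0`, then the transpose function
`h(x) = x * g(x⁻¹)` is also operator convex on `(0, ∞)`. -/
theorem operatorConvex_transpose (g : ℝ → ℝ) (hg : OperatorConvex g) (hg1 : g 1 = 0) :
    OperatorConvex (fun x => x * g x⁻¹) :=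
  operatorConvex_transpose_general g hg
end
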